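/- For every polyadic space X, the π-weight of X equals the weight of X: π(X) = w(X). -/

import Mathlib

open Cardinal Set Function

universe u

noncomputable section

/-- The density of a topological space: least cardinality of a dense subset. -/
def tdensity (X : Type u) [TopologicalSpace X] : Cardinal.{u} :=
  sInf {c : Cardinal.{u} | ∃ s : Set X, Dense s ∧ #s = c}

/-- The weight of a topological space: least cardinality of a base. -/
def tweight (X : Type u) [TopologicalSpace X] : Cardinal.{u} :=
  sInf {c : Cardinal.{u} | ∃ B : Set (Set X), TopologicalSpace.IsTopologicalBasis B ∧ #B = c}

/-- The π-weight: least cardinality of a π-base. -/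
def piWeight (X : Type u) [TopologicalSpace X] : Cardinal.{u} :=
  sInf {c : Cardinal.{u} | ∃ B : Set (Set X),
    (∀ U ∈ B, IsOpen U ∧ U.Nonempty) ∧
    (∀ V : Set X, IsOpen V → V.Nonempty → ∃ U ∈ B, U ⊆ V) ∧ #B = c}

/-- ĉ(X): the least cardinal κ such that X has no pairwise disjoint family of κ
nonempty open sets. -/
def hatCell (X : Type u) [TopologicalSpace X] : Cardinal.{u} :=
  sInf {c : Cardinal.{u} | ¬ ∃ 𝒰 : Set (Set X),
    (∀ U ∈ 𝒰, IsOpen U ∧ U.Nonempty) ∧ 𝒰.PairwiseDisjoint id ∧ #𝒰 = c}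

/-- `H` is a closed G_λ set: closed and the intersection of at most λ open sets. -/
def IsClosedGLambda (lam : Cardinal.{u}) {X : Type u} [TopologicalSpace X] (H : Set X) : Prop :=
  IsClosed H ∧ ∃ 𝒰 : Set (Set X), (∀ U ∈ 𝒰, IsOpen U) ∧ #𝒰 ≤ lam ∧ H = ⋂₀ 𝒰

/-- X ∈ Γ(λ): every closed G_λ set has density ≤ λ. -/
def InGamma (lam : Cardinal.{u}) (X : Type u) [TopologicalSpace X] : Prop :=
  ∀ H : Set X, IsClosedGLambda lam H → tdensity ↥H ≤ lam

/-- `S` witnesses `X ∈ Δ(λ)`. -/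
def DeltaWitness (lam : Cardinal.{u}) (X : Type u) [TopologicalSpace X] (S : Set X) : Prop :=
  Dense S ∧
  (∀ T : Set X, T ⊆ S → #T < lam → tweight ↥(closure T) < lam) ∧
  (∀ (Y : Type u) (_ : TopologicalSpace Y), T2Space Y → ∀ f : X → Y,
     Continuous f → Surjective f → tweight Y = lam → #(f '' S) = lam)

/-- X ∈ Δ(λ). -/
def InDelta (lam : Cardinal.{u}) (X : Type u) [TopologicalSpace X] : Prop :=
  lam ≤ tweight X ∧ ∃ S : Set X, DeltaWitness lam X S

/-- A canonical discrete space of cardinality `c`. -/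
instance (c : Cardinal.{u}) : TopologicalSpace c.out := ⊥

instance (c : Cardinal.{u}) : DiscreteTopology c.out := ⟨rfl⟩

/-- A(μ): one-point compactification of a discrete space of cardinality μ. -/
def ACompact (μ : Cardinal.{u}) : Type u := OnePoint μ.out

instance (μ : Cardinal.{u}) : TopologicalSpace (ACompact μ) :=
  inferInstanceAs (TopologicalSpace (OnePoint μ.out))

/-- A(μ)^κ. -/
def APow (μ κ : Cardinal.{u}) : Type u := κ.out → ACompact μ

instance (μ κ : Cardinal.{u}) : TopologicalSpace (APow μ κ) :=
  inferInstanceAs (TopologicalSpace (κ.out → ACompact μ))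

/-- The set of finite-support points of A(μ)^κ. -/
def finSupport (μ κ : Cardinal.{u}) : Set (APow μ κ) :=
  {x | {ξ | x ξ ≠ (OnePoint.infty : OnePoint μ.out)}.Finite}

/-- X is polyadic: a continuous image of some A(μ)^κ. -/
def IsPolyadic (X : Type u) [TopologicalSpace X] : Prop :=
  ∃ μ κ : Cardinal.{u}, ℵ₀ ≤ μ ∧ ∃ f : APow μ κ → X, Continuous f ∧ Surjective f

/-!
Let `B` be a π-base of `X` of minimal size and `f : A(μ)^κ → X` continuous and onto. Each
`U ∈ B` contains `f p_U` for a point `p_U` with finite support. The coordinates of these points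
form at most `|B| · ℵ₀` pairs `(i, b)`, so, with `Dᵢ = {b | ∃ U, p_U i = b}`, the compact product
`∏ᵢ A(Dᵢ) ⊆ A(μ)^κ` has weight at most `|B| + ℵ₀`. Its image under `f` is closed and meets every
member of `B`, hence is all of `X`; and a Hausdorff continuous image of a compact space has weight
at most that of the domain plus `ℵ₀`. If `B` is finite, `X` is a finite discrete space.
-/

open TopologicalSpace Filter
open scoped OnePoint

lemma Cardinal.mk_setOf_finite_subset_le {α : Type u} (s : Set α) :
    #{F : Set α | F.Finite ∧ F ⊆ s} ≤ max ℵ₀ #s := by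
  have hsub : {F : Set α | F.Finite ∧ F ⊆ s} ⊆
      range (fun F : Finset s => Subtype.val '' (F : Set s)) := by
    rintro F ⟨hF, hFs⟩
    refine ⟨(hF.preimage Subtype.val_injective.injOn).toFinset, ?_⟩
    simpa [image_preimage_eq_inter_range] using hFs
  calc #{F : Set α | F.Finite ∧ F ⊆ s} ≤ #(Finset s) := (mk_le_mk_of_subset hsub).trans mk_range_le
    _ ≤ max ℵ₀ #s := by
      rcases finite_or_infinite s with h | h
      · exact le_max_of_le_left mk_le_aleph0
      · exact le_max_of_le_right (mk_finset_of_infinite s).le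

section Weight

variable {X : Type u} [TopologicalSpace X]

structure IsPiBase (B : Set (Set X)) : Prop where
  isOpen : ∀ U ∈ B, IsOpen U
  nonempty : ∀ U ∈ B, U.Nonempty
  exists_subset : ∀ V : Set X, IsOpen V → V.Nonempty → ∃ U ∈ B, U ⊆ V

lemma tweight_le_mk {B : Set (Set X)} (hB : IsTopologicalBasis B) : tweight X ≤ #B :=
  csInf_le' ⟨B, hB, rfl⟩

lemma piWeight_le_mk {B : Set (Set X)} (hB : IsPiBase B) : piWeight X ≤ #B :=
  csInf_le' ⟨B, fun U hU => ⟨hB.isOpen U hU, hB.nonempty U hU⟩, hB.exists_subset, rfl⟩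

variable (X) in
lemma exists_isTopologicalBasis_mk_eq_tweight :
    ∃ B : Set (Set X), IsTopologicalBasis B ∧ #B = tweight X :=
  csInf_mem (s := {c | ∃ B : Set (Set X), IsTopologicalBasis B ∧ #B = c})
    ⟨_, _, isTopologicalBasis_opens, rfl⟩

variable (X) in
lemma exists_isPiBase_mk_eq_piWeight : ∃ B : Set (Set X), IsPiBase B ∧ #B = piWeight X := by
  obtain ⟨B, hB, hpi, hcard⟩ := csInf_mem (s := {c | ∃ B : Set (Set X),
    (∀ U ∈ B, IsOpen U ∧ U.Nonempty) ∧
    (∀ V : Set X, IsOpen V → V.Nonempty → ∃ U ∈ B, U ⊆ V) ∧ #B = c})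
    ⟨_, {U | IsOpen U ∧ U.Nonempty}, fun U hU => hU, fun V hV hne => ⟨V, ⟨hV, hne⟩, le_rfl⟩, rfl⟩
  exact ⟨B, ⟨fun U hU => (hB U hU).1, fun U hU => (hB U hU).2, hpi⟩, hcard⟩

lemma TopologicalSpace.IsTopologicalBasis.isPiBase_diff_empty {B : Set (Set X)}
    (hB : IsTopologicalBasis B) : IsPiBase (B \ {∅}) where
  isOpen _ hU := hB.isOpen hU.1
  nonempty _ hU := nonempty_iff_ne_empty.2 hU.2
  exists_subset _ hV := fun ⟨x, hx⟩ =>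
    let ⟨U, hUB, hxU, hUV⟩ := hB.exists_subset_of_mem_open hx hV
    ⟨U, ⟨hUB, ne_of_mem_of_not_mem' hxU (notMem_empty x)⟩, hUV⟩

variable (X) in
lemma piWeight_le_tweight : piWeight X ≤ tweight X := by
  obtain ⟨B, hB, hcard⟩ := exists_isTopologicalBasis_mk_eq_tweight X
  calc piWeight X ≤ #(B \ {∅} : Set (Set X)) := piWeight_le_mk hB.isPiBase_diff_empty
    _ ≤ tweight X := hcard ▸ mk_le_mk_of_subset sdiff_subset

lemma IsPiBase.eq_univ_of_isClosed {B : Set (Set X)} (hB : IsPiBase B) {K : Set X}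
    (hK : IsClosed K) (hmeet : ∀ U ∈ B, (U ∩ K).Nonempty) : K = Set.univ := by
  by_contra hne
  obtain ⟨U, hUB, hUK⟩ := hB.exists_subset _ hK.isOpen_compl (nonempty_compl.2 hne)
  obtain ⟨x, hxU, hxK⟩ := hmeet U hUB
  exact hUK hxU hxK

lemma IsPiBase.tweight_le_of_finite [T1Space X] {B : Set (Set X)} (hB : IsPiBase B)
    (hfin : B.Finite) : tweight X ≤ #B := by
  choose x hx using hB.nonempty
  have : Finite B := hfin.to_subtype
  have : Finite X := by
    have hrange : range (fun U : B => x U U.2) = Set.univ :=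
      hB.eq_univ_of_isClosed (finite_range _).isClosed fun U hU => ⟨_, hx U hU, ⟨U, hU⟩, rfl⟩
    exact finite_univ_iff.1 (hrange ▸ finite_range _)
  have hsingleton : ∀ y : X, {y} ∈ B := fun y => by
    obtain ⟨U, hUB, hUy⟩ := hB.exists_subset {y} (isOpen_discrete _) (singleton_nonempty y)
    exact ((hB.nonempty U hUB).subset_singleton_iff.1 hUy) ▸ hUB
  calc tweight X ≤ _ := tweight_le_mk (isTopologicalBasis_singletons X)
    _ ≤ #B := mk_le_mk_of_subset (by rintro _ ⟨y, rfl⟩; exact hsingleton y)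

lemma tweight_le_of_eq_generateFrom {s : Set (Set X)} (hs : ‹TopologicalSpace X› = generateFrom s) :
    tweight X ≤ max ℵ₀ #s :=
  (tweight_le_mk (isTopologicalBasis_of_subbasis hs)).trans
    (mk_image_le.trans (Cardinal.mk_setOf_finite_subset_le s))

lemma tweight_le_of_continuous_of_surjective {Y : Type u} [TopologicalSpace Y] [CompactSpace Y]
    [T2Space X] {g : Y → X} (hg : Continuous g) (hgs : Surjective g) :
    tweight X ≤ max ℵ₀ (tweight Y) := by
  obtain ⟨A, hA, hcard⟩ := exists_isTopologicalBasis_mk_eq_tweight Y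
  set G : Set (Set Y) → Set X := fun F => (g '' (⋃₀ F)ᶜ)ᶜ
  have hbasis : IsTopologicalBasis (G '' {F | F.Finite ∧ F ⊆ A}) := by
    refine isTopologicalBasis_of_isOpen_of_nhds ?_ fun x W hxW hW => ?_
    · rintro _ ⟨F, ⟨-, hFA⟩, rfl⟩
      exact (hg.isClosedMap _ (isOpen_sUnion fun a ha => hA.isOpen (hFA ha)).isClosed_compl
        ).isOpen_compl
    -- the fibre over `x` is compact, so finitely many basic sets inside `g ⁻¹' W` cover it
    have hcover : g ⁻¹' {x} ⊆ ⋃ a ∈ {a ∈ A | a ⊆ g ⁻¹' W}, id a := fun y hy => by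
      obtain ⟨a, haA, hya, haW⟩ := hA.exists_subset_of_mem_open
        (show y ∈ g ⁻¹' W from (congrArg (· ∈ W) hy).mpr hxW) (hW.preimage hg)
      exact mem_biUnion ⟨haA, haW⟩ hya
    obtain ⟨F, hFsub, hFfin, hFcover⟩ := (isClosed_singleton.preimage hg).isCompact
      |>.elim_finite_subcover_image (fun a ha => hA.isOpen ha.1) hcover
    refine ⟨G F, mem_image_of_mem G ⟨hFfin, fun a ha => (hFsub ha).1⟩, ?_, ?_⟩
    · rintro ⟨y, hyF, rfl⟩
      exact hyF (sUnion_eq_biUnion ▸ hFcover rfl)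
    · intro z hz
      obtain ⟨y, rfl⟩ := hgs z
      by_contra hyW
      refine hz ⟨y, fun hyF => ?_, rfl⟩
      obtain ⟨a, haF, hya⟩ := hyF
      exact hyW ((hFsub haF).2 hya)
  calc tweight X ≤ #(G '' {F | F.Finite ∧ F ⊆ A}) := tweight_le_mk hbasis
    _ ≤ max ℵ₀ #A := mk_image_le.trans (Cardinal.mk_setOf_finite_subset_le A)
    _ = max ℵ₀ (tweight Y) := by rw [hcard]

end Weight

namespace OnePoint

variable {β : Type*} [TopologicalSpace β] [DiscreteTopology β]

lemma topologicalSpace_eq_generateFrom :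
    (inferInstance : TopologicalSpace (OnePoint β)) =
      generateFrom (range (fun b : β => {(b : OnePoint β)}) ∪
        range (fun b : β => {(b : OnePoint β)}ᶜ)) := by
  refine le_antisymm (le_generateFrom ?_) fun U hU => ?_
  · rintro _ (⟨b, rfl⟩ | ⟨b, rfl⟩)
    · simpa using isOpen_image_coe.2 (isOpen_discrete {b})
    · exact isClosed_singleton.isOpen_compl
  let := generateFrom (range (fun b : β => {(b : OnePoint β)}) ∪
    range (fun b : β => {(b : OnePoint β)}ᶜ))
  by_cases h : ∞ ∈ U
  · have hfin : ((↑) ⁻¹' U : Set β)ᶜ.Finite := ((isOpen_iff_of_mem' h).1 hU).1.finite_of_discrete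
    have hU : U = ⋂ b ∈ ((↑) ⁻¹' U : Set β)ᶜ, {(b : OnePoint β)}ᶜ := by
      ext x; induction x using OnePoint.rec <;> simp [h, not_imp_comm]
    rw [hU]
    exact hfin.isOpen_biInter fun b _ => .basic _ (.inr ⟨b, rfl⟩)
  · have hU : U = ⋃ b ∈ ((↑) ⁻¹' U : Set β), {(b : OnePoint β)} := by
      ext x; induction x using OnePoint.rec <;> simp [h]
    rw [hU]
    exact isOpen_biUnion fun b _ => .basic _ (.inl ⟨b, rfl⟩)

lemma continuous_map_of_injective {γ : Type*} [TopologicalSpace γ] [DiscreteTopology γ]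
    {f : γ → β} (hf : Injective f) : Continuous (OnePoint.map f) :=
  continuous_map continuous_of_discreteTopology <| by
    simpa only [coclosedCompact_eq_cocompact, cocompact_eq_cofinite] using hf.tendsto_cofinite

end OnePoint

lemma Pi.topologicalSpace_eq_generateFrom_iUnion {ι : Type*} {A : ι → Type*}
    [t : ∀ i, TopologicalSpace (A i)] {g : ∀ i, Set (Set (A i))}
    (hg : ∀ i, t i = generateFrom (g i)) :
    Pi.topologicalSpace = generateFrom (⋃ i, (eval i ⁻¹' ·) '' g i) := by
  simp only [Pi.topologicalSpace, hg, induced_generateFrom_eq, generateFrom_iUnion]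

lemma tweight_pi_onePoint_le {ι : Type u} {β : ι → Type u} [∀ i, TopologicalSpace (β i)]
    [∀ i, DiscreteTopology (β i)] : tweight (∀ i, OnePoint (β i)) ≤ max ℵ₀ #(Σ i, β i) := by
  refine (tweight_le_of_eq_generateFrom (Pi.topologicalSpace_eq_generateFrom_iUnion
    fun _ => OnePoint.topologicalSpace_eq_generateFrom)).trans (max_le (le_max_left _ _) ?_)
  calc _ ≤ #(range (fun p : Σ i, β i => {x : ∀ i, OnePoint (β i) | x p.1 = p.2}) ∪
          range (fun p : Σ i, β i => {x : ∀ i, OnePoint (β i) | x p.1 ≠ p.2}) : Set _) := by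
        refine mk_le_mk_of_subset ?_
        rintro _ ⟨_, ⟨i, rfl⟩, _, ⟨b, rfl⟩ | ⟨b, rfl⟩, rfl⟩
        exacts [.inl ⟨⟨i, b⟩, rfl⟩, .inr ⟨⟨i, b⟩, rfl⟩]
    _ ≤ #(Σ i, β i) + #(Σ i, β i) := (mk_union_le _ _).trans (add_le_add mk_range_le mk_range_le)
    _ ≤ max ℵ₀ #(Σ i, β i) := (add_le_max _ _).trans (by simp [max_comm])

lemma IsOpen.exists_mem_finite_setOf_ne {ι : Type*} {π : ι → Type*}
    [∀ i, TopologicalSpace (π i)] {W : Set (∀ i, π i)} (hW : IsOpen W) (hne : W.Nonempty)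
    (c : ∀ i, π i) :
    ∃ x ∈ W, {i | x i ≠ c i}.Finite := by
  classical
  obtain ⟨z, hz⟩ := hne
  obtain ⟨I, u, hzu, hIW⟩ := isOpen_pi_iff.1 hW z hz
  refine ⟨(I : Set ι).piecewise z c, hIW fun i hi => ?_, I.finite_toSet.subset fun i hi => ?_⟩
  · simpa [Set.piecewise_eq_of_mem _ _ _ hi] using (hzu i hi).2
  · by_contra hiI
    exact hi (Set.piecewise_eq_of_notMem _ _ _ hiI)

lemma Cardinal.mk_sigma_coords_le {α ι β : Type u} (p : α → ι → OnePoint β)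
    (hp : ∀ a, {i | p a i ≠ ∞}.Finite) : #(Σ i, {b : β | ∃ a, p a i = b}) ≤ max ℵ₀ #α := by
  set E : α → Set (ι × β) := fun a => {q | p a q.1 = q.2}
  have hEfin : ∀ a, (E a).Finite := fun a => by
    refine ((hp a).subset ?_).of_finite_image fun q hq q' hq' h => Prod.ext h ?_
    · rintro _ ⟨q, hq, rfl⟩
      exact ne_of_eq_of_ne hq.out (OnePoint.coe_ne_infty q.2)
    · exact OnePoint.coe_injective (by rw [← hq.out, ← hq'.out, h])
  have hinj : Injective fun q : Σ i, {b : β | ∃ a, p a i = b} =>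
      (⟨(q.1, q.2), mem_iUnion.2 ⟨_, q.2.2.choose_spec⟩⟩ : ⋃ a, E a) := by
    rintro ⟨i, b, hb⟩ ⟨i', b', hb'⟩ h
    simp only [Subtype.mk.injEq, Prod.mk.injEq] at h
    obtain ⟨rfl, rfl⟩ := h
    rfl
  calc #(Σ i, {b : β | ∃ a, p a i = b}) ≤ #(⋃ a, E a) := mk_le_of_injective hinj
    _ ≤ #α * ⨆ a, #(E a) := mk_iUnion_le E
    _ ≤ #α * ℵ₀ := mul_le_mul' le_rfl (ciSup_le' fun a => (hEfin a).lt_aleph0.le)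
    _ ≤ max ℵ₀ #α := (mul_le_max _ _).trans (by simp [max_comm])

theorem IsPiBase.tweight_le_of_surjective_onePoint_pi {ι β X : Type u} [TopologicalSpace β]
    [DiscreteTopology β] [TopologicalSpace X] [T2Space X] {f : (ι → OnePoint β) → X}
    (hf : Continuous f) (hfs : Surjective f) {B : Set (Set X)} (hB : IsPiBase B) :
    tweight X ≤ max ℵ₀ #B := by
  have hpoint : ∀ U : B, ∃ x ∈ f ⁻¹' U, {i | x i ≠ ∞}.Finite := fun U =>
    ((hB.isOpen U U.2).preimage hf).exists_mem_finite_setOf_ne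
      ((hB.nonempty U U.2).preimage hfs) _
  choose p hpU hpfin using hpoint
  set D : ι → Set β := fun i => {b | ∃ U, p U i = b}
  set j : (∀ i, OnePoint (D i)) → (ι → OnePoint β) := fun y i => (y i).map Subtype.val
  have hj : Continuous j := continuous_pi fun i =>
    (OnePoint.continuous_map_of_injective Subtype.val_injective).comp (continuous_apply i)
  have hpj : ∀ U, p U ∈ range j := fun U => by
    have hlift : ∀ i, ∃ a : OnePoint (D i), a.map Subtype.val = p U i := fun i => by
      induction h : p U i using OnePoint.rec with
      | infty => exact ⟨∞, rfl⟩
      | coe b => exact ⟨(⟨b, U, h⟩ : D i), rfl⟩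
    choose y hy using hlift
    exact ⟨y, funext hy⟩
  have hfj : Surjective (f ∘ j) := by
    refine range_eq_univ.1 (hB.eq_univ_of_isClosed (isCompact_range (hf.comp hj)).isClosed ?_)
    intro U hU
    obtain ⟨y, hy⟩ := hpj ⟨U, hU⟩
    exact ⟨f (p ⟨U, hU⟩), hpU ⟨U, hU⟩, y, congrArg f hy⟩
  calc tweight X ≤ max ℵ₀ (tweight (∀ i, OnePoint (D i))) :=
        tweight_le_of_continuous_of_surjective (hf.comp hj) hfj
    _ ≤ max ℵ₀ (max ℵ₀ #(Σ i, D i)) := max_le_max le_rfl tweight_pi_onePoint_le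
    _ ≤ max ℵ₀ #B := by
      rw [← max_assoc, max_self]
      exact max_le (le_max_left _ _) (Cardinal.mk_sigma_coords_le p hpfin)

theorem statement14_general {X : Type u} [TopologicalSpace X] [T2Space X]
    (hX : IsPolyadic X) : piWeight X = tweight X := by
  refine le_antisymm (piWeight_le_tweight X) ?_
  obtain ⟨μ, κ, -, f, hf, hfs⟩ := hX
  obtain ⟨B, hB, hBcard⟩ := exists_isPiBase_mk_eq_piWeight X
  rw [← hBcard]
  rcases B.finite_or_infinite with hfin | hinf
  · exact hB.tweight_le_of_finite hfin
  · have : Infinite B := hinf.to_subtype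
    calc tweight X ≤ max ℵ₀ #B := hB.tweight_le_of_surjective_onePoint_pi hf hfs
      _ = #B := max_eq_right (aleph0_le_mk B)

/-- π(X) = w(X) for polyadic X. -/
theorem statement14 {X : Type u} [TopologicalSpace X] [CompactSpace X] [T2Space X]
    (hX : IsPolyadic X) : piWeight X = tweight X :=
  statement14_general hX
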